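/- arXiv:0711.3493 — 4 statements merged into one kernel-verified Lean document; each statement's English description precedes it below -/
import Mathlib

section
/- Let A and B be finite sets, F a bipartite graph with parts A and B, |A| = m, and s a positive integer. If t is the maximum integer x such that F contains a complete bipartite subgraph with a part of size s in A and a part of size x in B, then t · C(m, s) ≥ Σ_{u ∈ B} C(d(u), s), where d(u) is the degree of u in F and C denotes the binomial coefficient. -/
/-!
Count the pairs `(S, u)` with `S` an `s`-subset of `A` and `u ∈ B` adjacent to every vertex
of `S`. Grouping by `u` gives `∑_{u ∈ B} C(d(u), s)`; grouping by `S` gives a sum of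
`C(m, s)` sizes of common neighbourhoods, and each common neighbourhood of an `s`-set spans a
complete bipartite subgraph with that `s`-set, so has at most `t` vertices.
-/

open Finset

namespace Finset

variable {α β : Type*}

lemma choose_card_filter_eq_card_filter_powersetCard (A : Finset α) (p : α → Prop)
    [DecidablePred p] (s : ℕ) :
    (#(A.filter p)).choose s = #((A.powersetCard s).filter fun S => ∀ a ∈ S, p a) := by
  rw [← card_powersetCard]
  congr 1
  ext S
  simp only [mem_powersetCard, mem_filter, subset_iff]
  grind

lemma sum_choose_card_bipartiteBelow_eq_sum_card_filter_forall (r : α → β → Prop)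
    [∀ a b, Decidable (r a b)] (A : Finset α) (B : Finset β) (s : ℕ) :
    ∑ u ∈ B, (#(A.bipartiteBelow r u)).choose s =
      ∑ S ∈ A.powersetCard s, #(B.filter fun u => ∀ a ∈ S, r a u) := by
  simp only [bipartiteBelow, choose_card_filter_eq_card_filter_powersetCard]
  exact (sum_card_bipartiteAbove_eq_sum_card_bipartiteBelow
    (fun S u => ∀ a ∈ S, r a u)).symm

end Finset

theorem stmt_1_general {α β : Type*} [DecidableEq α] [DecidableEq β]
    (A : Finset α) (B : Finset β) (F : Finset (α × β))
    (m : ℕ) (hm : A.card = m) (s : ℕ)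
    (t : ℕ)
    (htmax : ∀ x : ℕ, (∃ S T, S ⊆ A ∧ T ⊆ B ∧ S.card = s ∧ T.card = x ∧
      ∀ a ∈ S, ∀ b ∈ T, (a, b) ∈ F) → x ≤ t) :
    t * m.choose s ≥ ∑ u ∈ B, ((A.filter fun a => (a, u) ∈ F).card).choose s := by
  have common_le : ∀ S ∈ A.powersetCard s, #(B.filter fun u => ∀ a ∈ S, (a, u) ∈ F) ≤ t := by
    intro S hS
    rw [mem_powersetCard] at hS
    exact htmax _ ⟨S, _, hS.1, filter_subset _ _, hS.2, rfl,
      fun a ha u hu => (mem_filter.1 hu).2 a ha⟩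
  calc ∑ u ∈ B, ((A.filter fun a => (a, u) ∈ F).card).choose s
      = ∑ S ∈ A.powersetCard s, #(B.filter fun u => ∀ a ∈ S, (a, u) ∈ F) :=
        sum_choose_card_bipartiteBelow_eq_sum_card_filter_forall (fun a u => (a, u) ∈ F) A B s
    _ ≤ #(A.powersetCard s) • t := sum_le_card_nsmul _ _ _ common_le
    _ = t * m.choose s := by rw [card_powersetCard, hm, smul_eq_mul, mul_comm]

/-- Double counting inequality (1) in the proof of Lemma 1: if `t` is the maximum size of a
part in `B` of a complete bipartite subgraph of `F` whose part in `A` has size `s`, then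
`t·C(m,s) ≥ Σ_{u ∈ B} C(d(u), s)`. -/
theorem stmt_1 {α β : Type*} [DecidableEq α] [DecidableEq β]
    (A : Finset α) (B : Finset β) (F : Finset (α × β)) (hF : F ⊆ A ×ˢ B)
    (m : ℕ) (hm : A.card = m) (s : ℕ) (hs : 1 ≤ s)
    (t : ℕ)
    (ht : ∃ S T, S ⊆ A ∧ T ⊆ B ∧ S.card = s ∧ T.card = t ∧
      ∀ a ∈ S, ∀ b ∈ T, (a, b) ∈ F)
    (htmax : ∀ x : ℕ, (∃ S T, S ⊆ A ∧ T ⊆ B ∧ S.card = s ∧ T.card = x ∧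
      ∀ a ∈ S, ∀ b ∈ T, (a, b) ∈ F) → x ≤ t) :
    t * m.choose s ≥ ∑ u ∈ B, ((A.filter fun a => (a, u) ∈ F).card).choose s :=
  stmt_1_general A B F m hm s t htmax
end

section
/- The function f : ℝ → ℝ defined by f(x) = x(x-1)(x-2)···(x-s+1)/s! for x ≥ s-1 and f(x) = 0 for x < s-1, where s is a positive integer, is convex on ℝ. -/
/-!
On `[s - 1, ∞)` every factor `x - i` of `x (x - 1) ⋯ (x - s + 1)` is nonnegative, increasing and
convex, and a product of nonnegative, increasing convex functions is again convex. Since the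
product vanishes at `x = s - 1`, `f x` is this product divided by `s!` evaluated at
`max x (s - 1)`, and an increasing convex function composed with the convex map
`x ↦ max x (s - 1)` is convex.
-/

open Finset Set

section ProdSub

variable {𝕜 ι : Type*} [Field 𝕜] [LinearOrder 𝕜] [IsStrictOrderedRing 𝕜]
  {t : Finset ι} {c : ι → 𝕜} {a : 𝕜}

lemma prod_sub_nonneg_of_mem_Ici (hc : ∀ i ∈ t, c i ≤ a) {x : 𝕜} (hx : x ∈ Ici a) :
    0 ≤ ∏ i ∈ t, (x - c i) :=
  prod_nonneg fun i hi => sub_nonneg.2 ((hc i hi).trans hx)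

lemma monotoneOn_prod_sub (hc : ∀ i ∈ t, c i ≤ a) :
    MonotoneOn (fun x => ∏ i ∈ t, (x - c i)) (Ici a) := fun _ hx _ _ hxy =>
  prod_le_prod (fun i hi => sub_nonneg.2 ((hc i hi).trans hx)) fun _ _ => sub_le_sub_right hxy _

lemma convexOn_prod_sub [DecidableEq ι] (hc : ∀ i ∈ t, c i ≤ a) :
    ConvexOn 𝕜 (Ici a) (fun x => ∏ i ∈ t, (x - c i)) := by
  induction t using Finset.induction_on with
  | empty => simpa using convexOn_const (1 : 𝕜) (convex_Ici a)
  | insert j t hj ih =>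
    have hct : ∀ i ∈ t, c i ≤ a := fun i hi => hc i (mem_insert_of_mem hi)
    have hcj : c j ≤ a := hc j (mem_insert_self j t)
    have hfactor : ConvexOn 𝕜 (Ici a) fun x => x - c j :=
      (convexOn_id (convex_Ici a)).sub (concaveOn_const _ (convex_Ici a))
    have hmono : MonotoneOn (fun x : 𝕜 => x - c j) (Ici a) := fun _ _ _ _ h => sub_le_sub_right h _
    simp_rw [prod_insert hj]
    exact hfactor.mul (ih hct) (fun _ hx => sub_nonneg.2 (hcj.trans hx))
      (fun _ hx => prod_sub_nonneg_of_mem_Ici hct hx) (hmono.monovaryOn (monotoneOn_prod_sub hct))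

end ProdSub

lemma ConvexOn.comp_max_const {𝕜 : Type*} [Field 𝕜] [LinearOrder 𝕜] [IsStrictOrderedRing 𝕜]
    {g : 𝕜 → 𝕜} {a : 𝕜} (hg : ConvexOn 𝕜 (Ici a) g) (hg_mono : MonotoneOn g (Ici a)) :
    ConvexOn 𝕜 univ fun x => g (max x a) := by
  have himage : (fun x => max x a) '' univ = Ici a :=
    Subset.antisymm (image_subset_iff.2 fun x _ => le_max_right x a)
      fun y hy => ⟨y, mem_univ y, max_eq_left hy⟩
  have hmax : ConvexOn 𝕜 univ fun x : 𝕜 => max x a :=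
    (convexOn_id convex_univ).sup (convexOn_const a convex_univ)
  exact ConvexOn.comp (himage ▸ hg) hmax (himage ▸ hg_mono)

lemma prod_range_sub_natCast_eq_zero {s : ℕ} (hs : 1 ≤ s) :
    ∏ i ∈ range s, ((s : ℝ) - 1 - i) = 0 := by
  obtain ⟨n, rfl⟩ := Nat.exists_eq_add_of_le' hs
  simp [prod_range_succ]

/-- The extension of the generalized binomial coefficient `C(x,s)` by `0` for `x < s-1`
is a convex function on `ℝ`. -/
theorem stmt_3 (s : ℕ) (hs : 1 ≤ s) (f : ℝ → ℝ)
    (hf : ∀ x : ℝ, f x = if x < (s : ℝ) - 1 then 0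
      else (∏ i ∈ Finset.range s, (x - i)) / (Nat.factorial s)) :
    ConvexOn ℝ Set.univ f := by
  have hroots : ∀ i ∈ range s, (i : ℝ) ≤ s - 1 := fun i hi => by
    have : i + 1 ≤ s := mem_range.1 hi
    rw [le_sub_iff_add_le]
    exact_mod_cast this
  have hconvex := ((convexOn_prod_sub hroots).comp_max_const (monotoneOn_prod_sub hroots)).smul
    (by positivity : (0 : ℝ) ≤ (Nat.factorial s : ℝ)⁻¹)
  refine hconvex.congr fun x _ => ?_
  rw [hf x]
  dsimp only
  rw [smul_eq_mul, ← div_eq_inv_mul]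
  split_ifs with hx
  · rw [max_eq_right hx.le, prod_range_sub_natCast_eq_zero hs, zero_div]
  · rw [max_eq_left (not_lt.1 hx)]
end

section
/- Base case r = 2: let 0 < c ≤ 1/2 and let G be a graph on n ≥ 2 vertices with more than c·n² edges counted as ordered pairs (i.e., at least c·n² ordered adjacent pairs). Then G contains a complete bipartite subgraph K(s, t) with s = ⌊c⁴ ln n⌋ and t > n^{1−c}. -/
/-!
Double counting in the style of Kővári–Sós–Turán. Counting pairs `(f, v)` where `f` is an
injective `s`-tuple of vertices all adjacent to `v` gives `∑_f |N(f)| = ∑_v (deg v)_s` (falling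
factorial). As `s ≤ cn/2` and the average degree is at least `cn`, Jensen's inequality bounds this
below by `n (cn/2)^s`. There are at most `n^s` tuples, and `(c/2)^s > n^(-c)` because
`s ≤ c⁴ ln n`, so some tuple has more than `n^(1-c)` common neighbours.
-/

open Finset

namespace SimpleGraph

variable {V : Type*} [Fintype V] (G : SimpleGraph V) [DecidableRel G.Adj]

theorem natCard_adj_eq_sum_degree :
    Nat.card {p : V × V // G.Adj p.1 p.2} = ∑ v, G.degree v := by
  rw [Nat.card_eq_fintype_card, ← dart_card_eq_sum_degrees]
  exact Fintype.card_congr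
    ⟨fun p => ⟨p.1, p.2⟩, fun d => ⟨d.toProd, d.adj⟩, fun _ => rfl, fun _ => rfl⟩

theorem card_embedding_forall_adj (ι : Type*) [Fintype ι] (v : V) :
    #{f : ι ↪ V | ∀ i, G.Adj (f i) v} = (G.degree v).descFactorial (Fintype.card ι) := by
  rw [← card_neighborSet_eq_degree, ← Fintype.card_embedding_eq, ← Fintype.card_subtype]
  exact Fintype.card_congr
    { toFun := fun f => f.1.codRestrict _ fun i => (G.mem_neighborSet v _).2 (f.2 i).symm
      invFun := fun g => ⟨g.trans (Function.Embedding.subtype _), fun i => (g i).2.symm⟩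
      left_inv := fun _ => rfl
      right_inv := fun _ => rfl }

theorem sum_card_forall_adj_eq_sum_descFactorial (ι : Type*) [Fintype ι] :
    ∑ f : ι ↪ V, #{v | ∀ i, G.Adj (f i) v}
      = ∑ v, (G.degree v).descFactorial (Fintype.card ι) := by
  simp_rw [card_filter]
  rw [sum_comm]
  simp_rw [← card_filter, card_embedding_forall_adj]

theorem exists_completeBipartite_of_card_embedding_mul_lt (ι : Type*) [Fintype ι] {B : ℝ}
    (h : Fintype.card (ι ↪ V) * B < ∑ v, ((G.degree v).descFactorial (Fintype.card ι) : ℝ)) :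
    ∃ S T : Finset V, Disjoint S T ∧ #S = Fintype.card ι ∧ B < #T ∧
      ∀ u ∈ S, ∀ v ∈ T, G.Adj u v := by
  rw [← Nat.cast_sum, ← sum_card_forall_adj_eq_sum_descFactorial, Nat.cast_sum,
    ← card_univ, ← nsmul_eq_mul, ← sum_const] at h
  obtain ⟨f, -, hf⟩ := exists_lt_of_sum_lt h
  refine ⟨univ.map f, _, ?_, by simp, hf, ?_⟩
  · simp only [Finset.disjoint_left, mem_map, mem_univ, true_and, mem_filter]
    rintro _ ⟨i, rfl⟩ h
    exact G.irrefl (h i)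
  · simp only [mem_map, mem_univ, true_and, mem_filter]
    rintro _ ⟨i, rfl⟩ v hv
    exact hv i

end SimpleGraph

theorem card_mul_pow_le_sum_pow {ι : Type*} {s : Finset ι} {f : ι → ℝ} (hf : ∀ i ∈ s, 0 ≤ f i)
    {a : ℝ} (ha : 0 ≤ a) (hsum : #s * a ≤ ∑ i ∈ s, f i) :
    ∀ k : ℕ, #s * a ^ k ≤ ∑ i ∈ s, f i ^ k
  | 0 => by simp
  | k + 1 => by
    rcases s.eq_empty_or_nonempty with rfl | hs
    · simp
    have hpos : (0 : ℝ) < #s ^ k := by have := hs.card_pos; positivity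
    refine le_of_mul_le_mul_left ?_ hpos
    calc (#s : ℝ) ^ k * (#s * a ^ (k + 1)) = (#s * a) ^ (k + 1) := by ring
      _ ≤ (∑ i ∈ s, f i) ^ (k + 1) := by gcongr
      _ ≤ #s ^ k * ∑ i ∈ s, f i ^ (k + 1) := pow_sum_le_card_mul_sum_pow hf k

theorem card_mul_pow_le_sum_descFactorial {ι : Type*} [Fintype ι] (d : ι → ℕ) (s : ℕ)
    {a : ℝ} (ha : 0 ≤ a) (hsum : Fintype.card ι * (a + s) ≤ ∑ i, (d i : ℝ)) :
    Fintype.card ι * a ^ s ≤ ∑ i, ((d i).descFactorial s : ℝ) := by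
  -- truncated subtraction keeps the terms nonnegative, as Jensen's inequality needs
  have hsub : (Fintype.card ι : ℝ) * a ≤ ∑ i, ((d i - s : ℕ) : ℝ) := by
    have : ∑ i, ((d i : ℝ) - s) ≤ ∑ i, ((d i - s : ℕ) : ℝ) :=
      sum_le_sum fun i _ => sub_le_iff_le_add.2 (by exact_mod_cast le_tsub_add)
    rw [sum_sub_distrib, sum_const, card_univ, nsmul_eq_mul] at this
    linarith
  calc (Fintype.card ι : ℝ) * a ^ s ≤ ∑ i, ((d i - s : ℕ) : ℝ) ^ s :=
        card_mul_pow_le_sum_pow (fun _ _ => Nat.cast_nonneg _) ha hsub s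
    _ ≤ ∑ i, ((d i).descFactorial s : ℝ) := sum_le_sum fun i _ => by
        exact_mod_cast
          (Nat.pow_le_pow_left (by omega) s).trans (Nat.pow_sub_le_descFactorial (d i) s)

open Real in
theorem rpow_one_sub_lt_pow_mul {x c : ℝ} {s : ℕ} (hx : 1 < x) (hc0 : 0 < c) (hc1 : c ≤ 1 / 2)
    (hs : (s : ℝ) ≤ c ^ 4 * log x) :
    x ^ (1 - c) < (c / 2) ^ s * x := by
  have hlogx : 0 < log x := log_pos hx
  have hlog2c : 0 < log (2 / c) := log_pos (by rw [lt_div_iff₀ hc0]; linarith)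
  have key : s * log (2 / c) < c * log x :=
    calc s * log (2 / c) ≤ c ^ 4 * log x * (2 / c) := by
          gcongr
          exact log_le_self (by positivity)
      _ = 2 * c ^ 2 * (c * log x) := by field_simp
      _ < c * log x := by
          have : c * log x > 0 := by positivity
          nlinarith
  have hc2 : log (c / 2) = -log (2 / c) := by rw [← log_inv, inv_div]
  rw [rpow_def_of_pos (by linarith), ← exp_log (by positivity : (0 : ℝ) < c / 2), ← exp_nat_mul,
    ← exp_log (by linarith : 0 < x), log_exp, ← exp_add, exp_lt_exp, hc2]
  linarith

theorem stmt_16_general {V : Type*} [Fintype V]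
    (G : SimpleGraph V) (n : ℕ) (hn : Fintype.card V = n) (hn2 : 2 ≤ n)
    (c : ℝ) (hc0 : 0 < c) (hc1 : c ≤ 1/2)
    (hedges : (Nat.card {p : V × V // G.Adj p.1 p.2} : ℝ) ≥ c * (n : ℝ) ^ 2) :
    ∃ S T : Finset V, Disjoint S T ∧ S.card = ⌊c ^ 4 * Real.log n⌋₊ ∧
      ((T.card : ℝ) > (n : ℝ) ^ ((1 : ℝ) - c)) ∧
      ∀ u ∈ S, ∀ v ∈ T, G.Adj u v := by
  classical
  set s := ⌊c ^ 4 * Real.log n⌋₊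
  have hn1 : (1 : ℝ) < n := by exact_mod_cast hn2
  have hs : (s : ℝ) ≤ c ^ 4 * Real.log n :=
    Nat.floor_le (mul_nonneg (by positivity) (Real.log_nonneg hn1.le))
  have hsn : (s : ℝ) ≤ c * n / 2 :=
    calc (s : ℝ) ≤ c ^ 4 * Real.log n := hs
      _ ≤ c ^ 3 * (c * n) := by
          rw [pow_succ, mul_assoc]; gcongr; exact Real.log_le_self (by positivity)
      _ ≤ (1 / 2) ^ 3 * (c * n) := by gcongr
      _ ≤ c * n / 2 := by nlinarith
  have hdeg : c * n ^ 2 ≤ ∑ v, (G.degree v : ℝ) := by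
    rw [G.natCard_adj_eq_sum_degree] at hedges
    exact_mod_cast hedges
  have hdesc : n * (c * n / 2) ^ s ≤ ∑ v, ((G.degree v).descFactorial s : ℝ) := by
    simpa only [hn] using card_mul_pow_le_sum_descFactorial (fun v => G.degree v) s
      (by positivity) (by rw [hn]; nlinarith)
  obtain ⟨S, T, hST, hS, hT, hadj⟩ := G.exists_completeBipartite_of_card_embedding_mul_lt (Fin s)
    (B := (n : ℝ) ^ (1 - c)) <|
    calc (Fintype.card (Fin s ↪ V) : ℝ) * (n : ℝ) ^ (1 - c)
        = n.descFactorial s * (n : ℝ) ^ (1 - c) := by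
          rw [Fintype.card_embedding_eq, Fintype.card_fin, hn]
      _ ≤ n ^ s * (n : ℝ) ^ (1 - c) := by gcongr; exact_mod_cast n.descFactorial_le_pow s
      _ < n ^ s * ((c / 2) ^ s * n) := by
          gcongr; exact rpow_one_sub_lt_pow_mul hn1 hc0 hc1 hs
      _ = n * (c * n / 2) ^ s := by ring
      _ ≤ _ := by simpa only [Fintype.card_fin] using hdesc
  exact ⟨S, T, hST, by rw [hS, Fintype.card_fin], hT, hadj⟩

/-- Base case `r = 2` of Theorem 3: a graph on `n ≥ 2` vertices with at least `c·n²`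
ordered adjacent pairs contains a complete bipartite subgraph `K(s,t)` with
`s = ⌊c⁴ ln n⌋` and `t > n^(1-c)`. -/
theorem stmt_16 {V : Type*} [Fintype V] [DecidableEq V]
    (G : SimpleGraph V) (n : ℕ) (hn : Fintype.card V = n) (hn2 : 2 ≤ n)
    (c : ℝ) (hc0 : 0 < c) (hc1 : c ≤ 1/2)
    (hedges : (Nat.card {p : V × V // G.Adj p.1 p.2} : ℝ) ≥ c * (n : ℝ) ^ 2) :
    ∃ S T : Finset V, Disjoint S T ∧ S.card = ⌊c ^ 4 * Real.log n⌋₊ ∧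
      ((T.card : ℝ) > (n : ℝ) ^ ((1 : ℝ) - c)) ∧
      ∀ u ∈ S, ∀ v ∈ T, G.Adj u v :=
  stmt_16_general G n hn hn2 c hc0 hc1 hedges
end

section
/- With probability tending to 1 as n → ∞, the Erdős–Rényi random graph G = G(n, 1/2) (edge probability 1/2) contains no complete bipartite subgraph K(s, s) with s = ⌈3 log₂ n⌉. -/
open Finset

/-- Modify `G` on cross edges between `S` and `T` according to the set `F ⊆ S ×ˢ T`. -/
def tweak {n : ℕ} (S T : Finset (Fin n)) (hd : Disjoint S T)
    (G : SimpleGraph (Fin n)) (F : Finset (Fin n × Fin n)) : SimpleGraph (Fin n) where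
  Adj a b := if (a, b) ∈ S ×ˢ T then (a, b) ∈ F
    else if (b, a) ∈ S ×ˢ T then (b, a) ∈ F else G.Adj a b
  symm := by
    refine ⟨fun a b h => ?_⟩
    simp only [mem_product] at *
    by_cases hab : a ∈ S ∧ b ∈ T
    · have : ¬ (b ∈ S ∧ a ∈ T) := fun h2 => (Finset.disjoint_left.mp hd hab.1 h2.2)
      simp only [hab, this, if_true, if_false] at h ⊢
      exact h
    · by_cases hba : b ∈ S ∧ a ∈ T
      · simp only [hab, hba, if_true, if_false] at h ⊢
        exact h
      · simp only [hab, hba, if_false] at h ⊢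
        exact G.adj_symm h
  loopless := by
    refine ⟨fun a h => ?_⟩
    simp only [mem_product] at h
    have : ¬ (a ∈ S ∧ a ∈ T) := fun h2 => (Finset.disjoint_left.mp hd h2.1 h2.2)
    simp only [this, if_false] at h
    exact G.irrefl h

lemma tweak_inj {n : ℕ} (S T : Finset (Fin n)) (hd : Disjoint S T) :
    Function.Injective (fun p : {G : SimpleGraph (Fin n) // ∀ u ∈ S, ∀ v ∈ T, G.Adj u v}
        × {F : Finset (Fin n × Fin n) // F ⊆ S ×ˢ T} =>
      tweak S T hd p.1.val p.2.val) := by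
  rintro ⟨⟨G, hG⟩, ⟨F, hF⟩⟩ ⟨⟨H, hH⟩, ⟨F', hF'⟩⟩ h
  simp only at h
  have hFF : F = F' := by
    ext ⟨a, b⟩
    by_cases hab : (a, b) ∈ S ×ˢ T
    · have := congrArg (fun (K : SimpleGraph (Fin n)) => K.Adj a b) h
      simp only [tweak, hab, if_true] at this
      simpa using this
    · constructor <;> intro hm
      · exact absurd (hF hm) hab
      · exact absurd (hF' hm) hab
  have hGH : G = H := by
    ext a b
    by_cases hab : (a, b) ∈ S ×ˢ T
    · rw [mem_product] at hab
      constructor <;> intro _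
      · exact hH a hab.1 b hab.2
      · exact hG a hab.1 b hab.2
    · by_cases hba : (b, a) ∈ S ×ˢ T
      · rw [mem_product] at hba
        constructor <;> intro _
        · exact (hH b hba.1 a hba.2).symm
        · exact (hG b hba.1 a hba.2).symm
      · have := congrArg (fun (K : SimpleGraph (Fin n)) => K.Adj a b) h
        simp only [tweak, hab, hba, if_false] at this
        simpa using this
  simp [hFF, hGH]

lemma countA {n s : ℕ} (S T : Finset (Fin n)) (hd : Disjoint S T)
    (hS : S.card = s) (hT : T.card = s) :
    Nat.card {G : SimpleGraph (Fin n) // ∀ u ∈ S, ∀ v ∈ T, G.Adj u v} * 2 ^ (s * s)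
      ≤ Nat.card (SimpleGraph (Fin n)) := by
  classical
  have hcard : Nat.card {F : Finset (Fin n × Fin n) // F ⊆ S ×ˢ T} = 2 ^ (s * s) := by
    rw [Nat.card_eq_fintype_card, Fintype.card_subtype]
    have : (Finset.univ.filter (fun F : Finset (Fin n × Fin n) => F ⊆ S ×ˢ T))
        = (S ×ˢ T).powerset := by
      ext F; simp [Finset.mem_powerset]
    rw [this, Finset.card_powerset, Finset.card_product, hS, hT]
  calc Nat.card {G : SimpleGraph (Fin n) // ∀ u ∈ S, ∀ v ∈ T, G.Adj u v} * 2 ^ (s * s)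
      = Nat.card ({G : SimpleGraph (Fin n) // ∀ u ∈ S, ∀ v ∈ T, G.Adj u v}
        × {F : Finset (Fin n × Fin n) // F ⊆ S ×ˢ T}) := by rw [Nat.card_prod, hcard]
    _ ≤ Nat.card (SimpleGraph (Fin n)) := by
        rw [Nat.card_eq_fintype_card, Nat.card_eq_fintype_card]
        exact Fintype.card_le_of_injective _ (tweak_inj S T hd)

lemma countBad (n s : ℕ) :
    Nat.card {G : SimpleGraph (Fin n) //
        ∃ S T : Finset (Fin n), Disjoint S T ∧ S.card = s ∧ T.card = s ∧
          ∀ u ∈ S, ∀ v ∈ T, G.Adj u v} * 2 ^ (s * s)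
      ≤ n.choose s ^ 2 * Nat.card (SimpleGraph (Fin n)) := by
  classical
  set P : Finset (Finset (Fin n) × Finset (Fin n)) :=
    ((Finset.powersetCard s Finset.univ) ×ˢ (Finset.powersetCard s Finset.univ)).filter
      (fun p => Disjoint p.1 p.2) with hP
  have hsub : (Finset.univ.filter (fun G : SimpleGraph (Fin n) =>
      ∃ S T : Finset (Fin n), Disjoint S T ∧ S.card = s ∧ T.card = s ∧
        ∀ u ∈ S, ∀ v ∈ T, G.Adj u v))
      ⊆ P.biUnion (fun p => Finset.univ.filter
        (fun G : SimpleGraph (Fin n) => ∀ u ∈ p.1, ∀ v ∈ p.2, G.Adj u v)) := by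
    intro G hG
    simp only [Finset.mem_filter, Finset.mem_univ, true_and] at hG
    obtain ⟨S, T, hd, hS, hT, hadj⟩ := hG
    refine Finset.mem_biUnion.mpr ⟨(S, T), ?_, ?_⟩
    · simp [hP, Finset.mem_powersetCard_univ, hS, hT, hd]
    · simp only [Finset.mem_filter, Finset.mem_univ, true_and]
      exact hadj
  have h1 : Nat.card {G : SimpleGraph (Fin n) //
      ∃ S T : Finset (Fin n), Disjoint S T ∧ S.card = s ∧ T.card = s ∧
        ∀ u ∈ S, ∀ v ∈ T, G.Adj u v}
      ≤ ∑ p ∈ P, Nat.card {G : SimpleGraph (Fin n) // ∀ u ∈ p.1, ∀ v ∈ p.2, G.Adj u v} := by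
    rw [Nat.card_eq_fintype_card, Fintype.card_subtype]
    calc _ ≤ (P.biUnion (fun p => Finset.univ.filter
          (fun G : SimpleGraph (Fin n) => ∀ u ∈ p.1, ∀ v ∈ p.2, G.Adj u v))).card :=
        Finset.card_le_card hsub
      _ ≤ ∑ p ∈ P, (Finset.univ.filter
          (fun G : SimpleGraph (Fin n) => ∀ u ∈ p.1, ∀ v ∈ p.2, G.Adj u v)).card :=
        Finset.card_biUnion_le
      _ = _ := by
        refine Finset.sum_congr rfl fun p _ => ?_
        rw [Nat.card_eq_fintype_card, Fintype.card_subtype]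
  calc Nat.card {G : SimpleGraph (Fin n) //
      ∃ S T : Finset (Fin n), Disjoint S T ∧ S.card = s ∧ T.card = s ∧
        ∀ u ∈ S, ∀ v ∈ T, G.Adj u v} * 2 ^ (s * s)
      ≤ (∑ p ∈ P, Nat.card {G : SimpleGraph (Fin n) //
          ∀ u ∈ p.1, ∀ v ∈ p.2, G.Adj u v}) * 2 ^ (s * s) :=
        Nat.mul_le_mul_right _ h1
    _ = ∑ p ∈ P, Nat.card {G : SimpleGraph (Fin n) //
          ∀ u ∈ p.1, ∀ v ∈ p.2, G.Adj u v} * 2 ^ (s * s) := Finset.sum_mul ..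
    _ ≤ ∑ p ∈ P, Nat.card (SimpleGraph (Fin n)) := by
        refine Finset.sum_le_sum fun p hp => ?_
        simp only [hP, Finset.mem_filter, Finset.mem_product,
          Finset.mem_powersetCard_univ] at hp
        exact countA p.1 p.2 hp.2 hp.1.1 hp.1.2
    _ = P.card * Nat.card (SimpleGraph (Fin n)) := by rw [Finset.sum_const, smul_eq_mul]
    _ ≤ n.choose s ^ 2 * Nat.card (SimpleGraph (Fin n)) := by
        refine Nat.mul_le_mul_right _ ?_
        calc P.card ≤ ((Finset.powersetCard s (Finset.univ : Finset (Fin n))) ×ˢ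
            (Finset.powersetCard s Finset.univ)).card := Finset.card_filter_le _ _
          _ = n.choose s ^ 2 := by
            rw [Finset.card_product, Finset.card_powersetCard, Finset.card_univ,
              Fintype.card_fin, sq]

lemma key_bound {n : ℕ} (hn : 2 ≤ n) :
    (Nat.card {G : SimpleGraph (Fin n) //
        ∃ S T : Finset (Fin n), Disjoint S T ∧
          S.card = ⌈3 * Real.logb 2 n⌉₊ ∧ T.card = ⌈3 * Real.logb 2 n⌉₊ ∧
          ∀ u ∈ S, ∀ v ∈ T, G.Adj u v} : ℝ)
      / (Nat.card (SimpleGraph (Fin n)) : ℝ) ≤ 1 / n := by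
  set s := ⌈3 * Real.logb 2 n⌉₊ with hs
  set B := Nat.card {G : SimpleGraph (Fin n) //
      ∃ S T : Finset (Fin n), Disjoint S T ∧ S.card = s ∧ T.card = s ∧
        ∀ u ∈ S, ∀ v ∈ T, G.Adj u v} with hB
  set N := Nat.card (SimpleGraph (Fin n)) with hN
  have hn1 : (1:ℝ) < n := by exact_mod_cast lt_of_lt_of_le one_lt_two (by exact_mod_cast hn)
  have hlogpos : 0 < Real.logb 2 n := Real.logb_pos one_lt_two hn1
  have hs1 : 1 ≤ s := by
    rw [hs, Nat.one_le_ceil_iff]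
    exact mul_pos (by norm_num) hlogpos
  -- 2^s ≥ n^3 (in ℕ)
  have h2s : n ^ 3 ≤ 2 ^ s := by
    have hr : ((n:ℝ)) ^ (3:ℕ) ≤ (2:ℝ) ^ (s:ℕ) := by
      have h1 : (2:ℝ) ^ ((3 * Real.logb 2 n : ℝ)) ≤ (2:ℝ) ^ ((s:ℕ):ℝ) := by
        apply Real.rpow_le_rpow_of_exponent_le one_le_two
        exact Nat.le_ceil _
      have h2 : (2:ℝ) ^ ((3 * Real.logb 2 n : ℝ)) = ((n:ℝ)) ^ (3:ℕ) := by
        rw [mul_comm, Real.rpow_mul (by norm_num), Real.rpow_logb two_pos (by norm_num)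
          (by positivity), ← Real.rpow_natCast (n:ℝ) 3]
        norm_num
      rw [← h2, ← Real.rpow_natCast (2:ℝ) s]
      exact h1
    exact_mod_cast hr
  have hNpos : 0 < N := Nat.card_pos
  -- main ℕ inequality: B * n ≤ N
  have hmain : B * n ≤ N := by
    have h1 : B * 2 ^ (s * s) ≤ n ^ (2 * s) * N := by
      calc B * 2 ^ (s * s) ≤ n.choose s ^ 2 * N := countBad n s
        _ ≤ (n ^ s) ^ 2 * N := Nat.mul_le_mul_right _
            (Nat.pow_le_pow_left (Nat.choose_le_pow n s) 2)
        _ = n ^ (2 * s) * N := by rw [← pow_mul, mul_comm s 2]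
    have h2 : n ^ (2 * s) * n ≤ 2 ^ (s * s) := by
      calc n ^ (2 * s) * n = n ^ (2 * s + 1) := by rw [pow_succ]
        _ ≤ n ^ (3 * s) := Nat.pow_le_pow_right (le_trans (by norm_num) hn)
            (by omega)
        _ = (n ^ 3) ^ s := by rw [← pow_mul, mul_comm]
        _ ≤ (2 ^ s) ^ s := Nat.pow_le_pow_left h2s s
        _ = 2 ^ (s * s) := by rw [← pow_mul]
    have h3 : B * n * 2 ^ (s * s) ≤ N * 2 ^ (s * s) := by
      calc B * n * 2 ^ (s * s) = B * 2 ^ (s * s) * n := by ring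
        _ ≤ n ^ (2 * s) * N * n := Nat.mul_le_mul_right _ h1
        _ = (n ^ (2 * s) * n) * N := by ring
        _ ≤ 2 ^ (s * s) * N := Nat.mul_le_mul_right _ h2
        _ = N * 2 ^ (s * s) := by ring
    exact Nat.le_of_mul_le_mul_right h3 (Nat.pow_pos (by norm_num))
  rw [div_le_div_iff₀ (by exact_mod_cast hNpos) (by positivity)]
  calc (B:ℝ) * n = ((B * n : ℕ) : ℝ) := by push_cast; ring
    _ ≤ (N:ℝ) := by exact_mod_cast hmain
    _ = 1 * N := (one_mul _).symm

/-- First moment claim for `G(n,1/2)` in counting form: the proportion of graphs on `n`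
labeled vertices that contain a complete bipartite subgraph `K(s,s)` with
`s = ⌈3 log₂ n⌉` tends to `0` as `n → ∞` (i.e. with high probability `G(n,1/2)` contains
no such `K(s,s)`). -/
theorem stmt_18 :
    Filter.Tendsto
      (fun n : ℕ =>
        ((Nat.card {G : SimpleGraph (Fin n) //
          ∃ S T : Finset (Fin n), Disjoint S T ∧
            S.card = ⌈3 * Real.logb 2 n⌉₊ ∧ T.card = ⌈3 * Real.logb 2 n⌉₊ ∧
            ∀ u ∈ S, ∀ v ∈ T, G.Adj u v} : ℝ)
          / (Nat.card (SimpleGraph (Fin n)) : ℝ)))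
      Filter.atTop (nhds 0) := by
  apply squeeze_zero' (f := _) (g := fun n : ℕ => 1 / (n:ℝ))
  · filter_upwards with n
    have : 0 < Nat.card (SimpleGraph (Fin n)) := Nat.card_pos
    positivity
  · filter_upwards [Filter.eventually_ge_atTop 2] with n hn
    exact key_bound hn
  · exact tendsto_one_div_atTop_nhds_zero_nat
end
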